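/- arXiv:2605.03263 — 2 statements merged into one kernel-verified Lean document; each statement's English description precedes it below -/
import Mathlib

section
/- Let h ≥ 1 and d₁, …, d_h be positive integers with d = d₁ + ⋯ + d_h. For each i = 1, …, h let M_i, B_i ∈ ℝ^{d_i×d} be matrices with ‖M_i − B_i‖₂ ≤ δ, where δ > 0. Write [M_i]_j ∈ ℝ^{d_i×d_j} for the j-th block column of M_i (and similarly [B_i]_j for B_i). Define the block matrices Â, A ∈ ℝ^{d×d} by Â_{ii} = 0, Â_{ij} = ½([M_i]_j − ([M_j]_i)ᵀ) for i ≠ j, and A_{ii} = 0, A_{ij} = ½([B_i]_j − ([B_j]_i)ᵀ) for i ≠ j. Then ‖Â − A‖₂ ≤ (h − 1)δ. -/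
/-!
The diagonal blocks of `Â − A` vanish and its `(i, j)` block is
`½([M_i − B_i]_j − ([M_j − B_j]_i)ᵀ)`, of norm at most `δ`, since a block column is no larger
than the whole map and the adjoint is an isometry. A block operator on the `ℓ²` product with
zero diagonal and blocks of norm at most `δ` has norm at most `(h − 1)δ`: by Cauchy–Schwarz
`‖(Cx)_i‖² ≤ δ²(h − 1) ∑_{j ≠ i} ‖x_j‖²`, and summing over `i` counts each `‖x_j‖²`
exactly `h − 1` times.
-/

noncomputable section

/-- The block Euclidean space `ℝ^{d₁} × ⋯ × ℝ^{d_h}` with the ℓ² product norm,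
identified with `ℝ^d`, `d = d₁ + ⋯ + d_h`. -/
abbrev Blk {h : ℕ} (d : Fin h → ℕ) : Type :=
  PiLp 2 fun i : Fin h => EuclideanSpace ℝ (Fin (d i))

/-- Projection onto the `i`-th block, as a continuous linear map. -/
noncomputable def blkProj {h : ℕ} (d : Fin h → ℕ) (i : Fin h) :
    Blk d →L[ℝ] EuclideanSpace ℝ (Fin (d i)) :=
  PiLp.proj 2 (fun i : Fin h => EuclideanSpace ℝ (Fin (d i))) i

/-- Inclusion of the `i`-th block, as a continuous linear map. -/
noncomputable def blkIncl {h : ℕ} (d : Fin h → ℕ) (i : Fin h) :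
    EuclideanSpace ℝ (Fin (d i)) →L[ℝ] Blk d :=
  LinearMap.toContinuousLinearMap
    (((WithLp.linearEquiv 2 ℝ (∀ i : Fin h, EuclideanSpace ℝ (Fin (d i)))).symm.toLinearMap).comp
      (LinearMap.single ℝ (fun i : Fin h => EuclideanSpace ℝ (Fin (d i))) i))

/-- The `(i,j)` block of a square map `C : ℝ^d →L ℝ^d`. -/
noncomputable def blkOf {h : ℕ} {d : Fin h → ℕ} (C : Blk d →L[ℝ] Blk d) (i j : Fin h) :
    EuclideanSpace ℝ (Fin (d j)) →L[ℝ] EuclideanSpace ℝ (Fin (d i)) :=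
  (blkProj d i).comp (C.comp (blkIncl d j))


/-- The `j`-th block column of a map `M : ℝ^d →L ℝ^{d_i}`. -/
noncomputable def blkCol {h : ℕ} {d : Fin h → ℕ} {m : ℕ}
    (M : Blk d →L[ℝ] EuclideanSpace ℝ (Fin m)) (j : Fin h) :
    EuclideanSpace ℝ (Fin (d j)) →L[ℝ] EuclideanSpace ℝ (Fin m) :=
  M.comp (blkIncl d j)

open Finset ContinuousLinearMap

lemma norm_le_of_norm_apply_le_mul_sum_erase {ι : Type*} [Fintype ι] [DecidableEq ι]
    [Nonempty ι] {E F : ι → Type*} [∀ i, SeminormedAddCommGroup (E i)]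
    [∀ i, SeminormedAddCommGroup (F i)] {δ : ℝ} (hδ : 0 ≤ δ) (x : PiLp 2 E) (y : PiLp 2 F)
    (hy : ∀ i, ‖y i‖ ≤ δ * ∑ j ∈ univ.erase i, ‖x j‖) :
    ‖y‖ ≤ ((Fintype.card ι : ℝ) - 1) * δ * ‖x‖ := by
  set n : ℝ := (Fintype.card ι : ℝ) - 1
  have hn : 0 ≤ n := sub_nonneg.2 (by exact_mod_cast Fintype.card_pos)
  have hcard : ∀ i : ι, (#(univ.erase i) : ℝ) = n := fun i => by
    rw [card_erase_of_mem (mem_univ i), card_univ, Nat.cast_pred Fintype.card_pos]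
  have hrow : ∀ i, ‖y i‖ ^ 2 ≤ δ ^ 2 * (n * ∑ j ∈ univ.erase i, ‖x j‖ ^ 2) := fun i =>
    calc ‖y i‖ ^ 2 ≤ (δ * ∑ j ∈ univ.erase i, ‖x j‖) ^ 2 :=
          pow_le_pow_left₀ (norm_nonneg _) (hy i) 2
      _ = δ ^ 2 * (∑ j ∈ univ.erase i, ‖x j‖) ^ 2 := mul_pow _ _ _
      _ ≤ δ ^ 2 * (n * ∑ j ∈ univ.erase i, ‖x j‖ ^ 2) := by
        gcongr
        rw [← hcard i]
        exact sq_sum_le_card_mul_sum_sq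
  have hcount : ∑ i, ∑ j ∈ univ.erase i, ‖x j‖ ^ 2 = n * ‖x‖ ^ 2 := by
    simp only [sum_erase_eq_sub (mem_univ _), sum_sub_distrib, sum_const, card_univ,
      nsmul_eq_mul, PiLp.norm_sq_eq_of_L2, n]
    ring
  rw [← sq_le_sq₀ (norm_nonneg _) (by positivity), PiLp.norm_sq_eq_of_L2]
  calc ∑ i, ‖y i‖ ^ 2 ≤ ∑ i, δ ^ 2 * (n * ∑ j ∈ univ.erase i, ‖x j‖ ^ 2) :=
        sum_le_sum fun i _ => hrow i
    _ = (n * δ * ‖x‖) ^ 2 := by rw [← mul_sum, ← mul_sum, hcount]; ring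

lemma norm_half_smul_sub_adjoint_sub_le {E F : Type*} [NormedAddCommGroup E]
    [InnerProductSpace ℝ E] [CompleteSpace E] [NormedAddCommGroup F] [InnerProductSpace ℝ F]
    [CompleteSpace F] (P P' : E →L[ℝ] F) (Q Q' : F →L[ℝ] E) :
    ‖(1 / 2 : ℝ) • (P - adjoint Q) - (1 / 2 : ℝ) • (P' - adjoint Q')‖ ≤
      (‖P - P'‖ + ‖Q - Q'‖) / 2 := by
  have hsplit : (P - adjoint Q) - (P' - adjoint Q') = (P - P') - adjoint (Q - Q') := by
    rw [map_sub]; abel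
  rw [← smul_sub, norm_smul, hsplit]
  calc ‖(1 / 2 : ℝ)‖ * ‖(P - P') - adjoint (Q - Q')‖
      ≤ ‖(1 / 2 : ℝ)‖ * (‖P - P'‖ + ‖adjoint (Q - Q')‖) := by gcongr; exact norm_sub_le _ _
    _ = (‖P - P'‖ + ‖Q - Q'‖) / 2 := by
      rw [LinearIsometryEquiv.norm_map, Real.norm_of_nonneg (by norm_num)]; ring

section Blocks

variable {h : ℕ} {d : Fin h → ℕ}

lemma blkIncl_apply (j : Fin h) (v : EuclideanSpace ℝ (Fin (d j))) :
    blkIncl d j v = PiLp.single 2 j v := rfl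

lemma norm_blkCol_le {m : ℕ} (M : Blk d →L[ℝ] EuclideanSpace ℝ (Fin m)) (j : Fin h) :
    ‖blkCol M j‖ ≤ ‖M‖ :=
  opNorm_le_bound _ (norm_nonneg _) fun v => by
    simpa [blkCol, blkIncl_apply, PiLp.norm_single] using M.le_opNorm (blkIncl d j v)

lemma blkCol_sub {m : ℕ} (M N : Blk d →L[ℝ] EuclideanSpace ℝ (Fin m)) (j : Fin h) :
    blkCol (M - N) j = blkCol M j - blkCol N j :=
  sub_comp _ _ _

lemma blkOf_sub (C D : Blk d →L[ℝ] Blk d) (i j : Fin h) :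
    blkOf (C - D) i j = blkOf C i j - blkOf D i j := by
  simp only [blkOf, sub_comp, comp_sub]

lemma sum_blkIncl_apply (x : Blk d) : ∑ j, blkIncl d j (x j) = x := by
  ext i : 1
  simp [blkIncl_apply]

lemma apply_eq_sum_blkOf (C : Blk d →L[ℝ] Blk d) (x : Blk d) (i : Fin h) :
    C x i = ∑ j, blkOf C i j (x j) := by
  conv_lhs => rw [← sum_blkIncl_apply x]
  simp [blkOf, blkProj]

lemma opNorm_le_of_blkOf [NeZero h] (C : Blk d →L[ℝ] Blk d) {δ : ℝ} (hδ : 0 ≤ δ)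
    (hdiag : ∀ i, blkOf C i i = 0) (hoff : ∀ i j, i ≠ j → ‖blkOf C i j‖ ≤ δ) :
    ‖C‖ ≤ ((h : ℝ) - 1) * δ := by
  have hh : (1 : ℝ) ≤ h := by exact_mod_cast NeZero.one_le
  refine opNorm_le_bound _ (mul_nonneg (sub_nonneg.2 hh) hδ) fun x => ?_
  simpa using norm_le_of_norm_apply_le_mul_sum_erase hδ x (C x) fun i => by
    rw [apply_eq_sum_blkOf, ← sum_erase _ (by rw [hdiag]; rfl), mul_sum]
    refine (norm_sum_le _ _).trans (sum_le_sum fun j hj => (le_opNorm _ _).trans ?_)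
    exact mul_le_mul_of_nonneg_right (hoff i j (ne_of_mem_erase hj).symm) (norm_nonneg _)

end Blocks

theorem skew_correction_error_le_general
    {h : ℕ} (hh : 1 ≤ h) (d : Fin h → ℕ)
    (δ : ℝ)
    (M B : ∀ i : Fin h, Blk d →L[ℝ] EuclideanSpace ℝ (Fin (d i)))
    (hMB : ∀ i, ‖M i - B i‖ ≤ δ)
    (Ahat A : Blk d →L[ℝ] Blk d)
    (hAhat_diag : ∀ i, blkOf Ahat i i = 0)
    (hAhat_off : ∀ i j, i ≠ j → blkOf Ahat i j =
      ((1:ℝ)/2) • (blkCol (M i) j - ContinuousLinearMap.adjoint (blkCol (M j) i)))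
    (hA_diag : ∀ i, blkOf A i i = 0)
    (hA_off : ∀ i j, i ≠ j → blkOf A i j =
      ((1:ℝ)/2) • (blkCol (B i) j - ContinuousLinearMap.adjoint (blkCol (B j) i))) :
    ‖Ahat - A‖ ≤ ((h : ℝ) - 1) * δ := by
  have : NeZero h := ⟨by omega⟩
  have hδ : 0 ≤ δ := (norm_nonneg _).trans (hMB ⟨0, hh⟩)
  refine opNorm_le_of_blkOf _ hδ (fun i => by rw [blkOf_sub, hAhat_diag, hA_diag, sub_zero])
    fun i j hij => ?_
  rw [blkOf_sub, hAhat_off i j hij, hA_off i j hij]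
  calc _ ≤ (‖blkCol (M i) j - blkCol (B i) j‖ + ‖blkCol (M j) i - blkCol (B j) i‖) / 2 :=
        norm_half_smul_sub_adjoint_sub_le _ _ _ _
    _ ≤ (δ + δ) / 2 := by
        rw [← blkCol_sub, ← blkCol_sub]
        gcongr <;> exact (norm_blkCol_le _ _).trans (hMB _)
    _ = δ := by ring

/-- **Key skew-correction error lemma (Lemma 2).**
If `‖M_i − B_i‖₂ ≤ δ` for each player `i`, and `Â`, `A` are the block matrices with zero
diagonal blocks and off-diagonal blocks `½([M_i]_j − ([M_j]_i)ᵀ)`, resp.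
`½([B_i]_j − ([B_j]_i)ᵀ)`, then `‖Â − A‖₂ ≤ (h − 1)δ`. -/
theorem skew_correction_error_le
    {h : ℕ} (hh : 1 ≤ h) (d : Fin h → ℕ) (hd : ∀ i, 0 < d i)
    (δ : ℝ) (hδ : 0 < δ)
    (M B : ∀ i : Fin h, Blk d →L[ℝ] EuclideanSpace ℝ (Fin (d i)))
    (hMB : ∀ i, ‖M i - B i‖ ≤ δ)
    (Ahat A : Blk d →L[ℝ] Blk d)
    (hAhat_diag : ∀ i, blkOf Ahat i i = 0)
    (hAhat_off : ∀ i j, i ≠ j → blkOf Ahat i j =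
      ((1:ℝ)/2) • (blkCol (M i) j - ContinuousLinearMap.adjoint (blkCol (M j) i)))
    (hA_diag : ∀ i, blkOf A i i = 0)
    (hA_off : ∀ i j, i ≠ j → blkOf A i j =
      ((1:ℝ)/2) • (blkCol (B i) j - ContinuousLinearMap.adjoint (blkCol (B j) i))) :
    ‖Ahat - A‖ ≤ ((h : ℝ) - 1) * δ :=
  skew_correction_error_le_general hh d δ M B hMB Ahat A hAhat_diag hAhat_off hA_diag hA_off
end
end

section
/- Let H ∈ ℝ^{d×d} be an invertible matrix, let S = ½(H + Hᵀ) be positive semidefinite, and let A = ½(H − Hᵀ). Then there exist η > 0 and τ > 0 such that ‖I − η(I − τA)H‖₂ < 1. -/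
/-!
Write `H = S + A`. Since `A` is skew, `⟪v, (1 - τA)Hv⟫ = ⟪v, Sv⟫ + τ⟪Av, Sv⟫ + τ‖Av‖²`.
For positive `S` one has `‖Sv‖² ≤ ‖S‖ ⟪v, Sv⟫`, so for `τ = 1 / (‖S‖ + 1)` the cross term is
absorbed and the form is at least `τ/2 (⟪v, Sv⟫ + ‖Av‖²)`. Invertibility of `H` together with
`‖Hv‖² ≤ 2‖Sv‖² + 2‖Av‖²` bounds `⟪v, Sv⟫ + ‖Av‖²` below by a multiple of `‖v‖²`, so `(1 - τA)H`
is coercive. Finally, for any coercive `T` with constant `μ`,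
`‖v - ηTv‖² ≤ (1 - 2ημ + η²‖T‖²)‖v‖²`, which is `< ‖v‖²` for small `η > 0`.
-/

open scoped RealInnerProductSpace

open ContinuousLinearMap

theorem exists_norm_le_mul_norm_apply_of_isUnit {𝕜 F : Type*} [NontriviallyNormedField 𝕜]
    [SeminormedAddCommGroup F] [NormedSpace 𝕜 F] {H : F →L[𝕜] F} (hH : IsUnit H) :
    ∃ k, ∀ v, ‖v‖ ≤ k * ‖H v‖ := by
  obtain ⟨u, rfl⟩ := hH
  refine ⟨‖(↑u⁻¹ : F →L[𝕜] F)‖, fun v => ?_⟩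
  calc ‖v‖ = ‖(↑u⁻¹ : F →L[𝕜] F) ((u : F →L[𝕜] F) v)‖ := by
        rw [← mul_apply_eq_comp, u.inv_mul, one_apply_eq_self]
    _ ≤ _ := le_opNorm _ _

variable {E : Type*} [NormedAddCommGroup E] [InnerProductSpace ℝ E]

theorem ContinuousLinearMap.IsPositive.norm_apply_sq_le {S : E →L[ℝ] E} (hS : S.IsPositive)
    (v : E) : ‖S v‖ ^ 2 ≤ ‖S‖ * ⟪v, S v⟫ := by
  -- Cauchy–Schwarz for the semi-inner product `⟪x, S y⟫`, at `x = S v` and `y = v`.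
  let B : LinearMap.BilinForm ℝ E := (innerₗ E).compl₂ (S : E →ₗ[ℝ] E)
  have hB : ∀ x y, B x y = ⟪x, S y⟫ := fun _ _ => rfl
  have hcs := B.apply_mul_apply_le_of_forall_zero_le (by simpa [hB] using hS.inner_nonneg_right)
    (S v) v
  simp only [hB, ← hS.inner_left_eq_inner_right v (S v), real_inner_self_eq_norm_sq] at hcs
  have hSSv : ⟪S v, S (S v)⟫ ≤ ‖S‖ * ‖S v‖ ^ 2 := by
    calc ⟪S v, S (S v)⟫ ≤ ‖S v‖ * ‖S (S v)‖ := real_inner_le_norm _ _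
      _ ≤ ‖S v‖ * (‖S‖ * ‖S v‖) := by gcongr; exact S.le_opNorm _
      _ = ‖S‖ * ‖S v‖ ^ 2 := by ring
  rcases (sq_nonneg ‖S v‖).eq_or_lt with h0 | hpos
  · rw [← h0]; exact mul_nonneg (norm_nonneg S) (hS.inner_nonneg_right v)
  · refine le_of_mul_le_mul_right ?_ hpos
    calc ‖S v‖ ^ 2 * ‖S v‖ ^ 2 ≤ ⟪S v, S (S v)⟫ * ⟪v, S v⟫ := hcs
      _ ≤ ‖S‖ * ‖S v‖ ^ 2 * ⟪v, S v⟫ :=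
        mul_le_mul_of_nonneg_right hSSv (hS.inner_nonneg_right v)
      _ = ‖S‖ * ⟪v, S v⟫ * ‖S v‖ ^ 2 := by ring

theorem inner_one_sub_smul_mul_add_apply {S A : E →L[ℝ] E} (hA : ∀ v w, ⟪A v, w⟫ = -⟪v, A w⟫)
    (τ : ℝ) (v : E) :
    ⟪v, ((1 - τ • A) * (S + A)) v⟫ = ⟪v, S v⟫ + τ * ⟪A v, S v⟫ + τ * ‖A v‖ ^ 2 := by
  have hAvv : ⟪v, A v⟫ = 0 := by linarith [hA v v, real_inner_comm v (A v)]
  have hAH : ⟪v, A (S v + A v)⟫ = -⟪A v, S v⟫ - ‖A v‖ ^ 2 := by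
    rw [← neg_neg ⟪v, _⟫, ← hA, inner_add_right, real_inner_self_eq_norm_sq, neg_add]
    ring
  simp only [mul_apply_eq_comp, sub_apply, smul_apply, add_apply, one_apply_eq_self,
    inner_sub_right, inner_add_right, real_inner_smul_right, hAvv, hAH]
  ring

theorem exists_norm_sq_le_mul_inner_add_norm_sq {S A : E →L[ℝ] E} (hS : S.IsPositive)
    (hH : IsUnit (S + A)) : ∃ K > (0 : ℝ), ∀ v, ‖v‖ ^ 2 ≤ K * (⟪v, S v⟫ + ‖A v‖ ^ 2) := by
  obtain ⟨k, hk⟩ := exists_norm_le_mul_norm_apply_of_isUnit hH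
  refine ⟨2 * (‖S‖ + 1) * k ^ 2 + 1, by positivity, fun v => ?_⟩
  have hq := hS.inner_nonneg_right v
  have hSA : ‖S v + A v‖ ^ 2 ≤ 2 * (‖S‖ + 1) * (⟪v, S v⟫ + ‖A v‖ ^ 2) := by
    have := parallelogram_law_with_norm ℝ (S v) (A v)
    nlinarith [hS.norm_apply_sq_le v, norm_nonneg S, sq_nonneg ‖S v - A v‖, sq_nonneg ‖A v‖]
  calc ‖v‖ ^ 2 ≤ k ^ 2 * ‖S v + A v‖ ^ 2 := by
        rw [← mul_pow]; exact pow_le_pow_left₀ (norm_nonneg v) (hk v) 2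
    _ ≤ k ^ 2 * (2 * (‖S‖ + 1) * (⟪v, S v⟫ + ‖A v‖ ^ 2)) := by gcongr
    _ ≤ (2 * (‖S‖ + 1) * k ^ 2 + 1) * (⟪v, S v⟫ + ‖A v‖ ^ 2) := by
        nlinarith [add_nonneg hq (sq_nonneg ‖A v‖)]

theorem exists_coercive_one_sub_smul_mul_add {S A : E →L[ℝ] E} (hS : S.IsPositive)
    (hA : ∀ v w, ⟪A v, w⟫ = -⟪v, A w⟫) (hH : IsUnit (S + A)) :
    ∃ τ > (0 : ℝ), ∃ μ > (0 : ℝ), ∀ v, μ * ‖v‖ ^ 2 ≤ ⟪v, ((1 - τ • A) * (S + A)) v⟫ := by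
  obtain ⟨K, hK, hcoer⟩ := exists_norm_sq_le_mul_inner_add_norm_sq hS hH
  set τ := 1 / (‖S‖ + 1)
  have hτ : 0 < τ := by positivity
  have hτ1 : τ ≤ 1 := div_le_one_of_le₀ (by linarith [norm_nonneg S]) (by positivity)
  have hτS : τ * ‖S‖ ≤ 1 := by
    rw [one_div_mul_eq_div, div_le_one (by positivity)]; linarith
  refine ⟨τ, hτ, τ / (2 * K), by positivity, fun v => ?_⟩
  rw [inner_one_sub_smul_mul_add_apply hA]
  have hq := hS.inner_nonneg_right v
  have hcross : -(‖A v‖ ^ 2 + ‖S v‖ ^ 2) / 2 ≤ ⟪A v, S v⟫ := by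
    nlinarith [neg_abs_le ⟪A v, S v⟫, abs_real_inner_le_norm (A v) (S v),
      sq_nonneg (‖A v‖ - ‖S v‖)]
  have hSv : τ * ‖S v‖ ^ 2 ≤ ⟪v, S v⟫ := by
    calc τ * ‖S v‖ ^ 2 ≤ τ * (‖S‖ * ⟪v, S v⟫) := by gcongr; exact hS.norm_apply_sq_le v
      _ ≤ ⟪v, S v⟫ := by rw [← mul_assoc]; exact mul_le_of_le_one_left hq hτS
  calc τ / (2 * K) * ‖v‖ ^ 2 ≤ τ / 2 * (⟪v, S v⟫ + ‖A v‖ ^ 2) := by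
        rw [div_mul_eq_mul_div, div_le_iff₀ (by positivity)]
        nlinarith [hcoer v]
    _ ≤ ⟪v, S v⟫ / 2 + τ * ‖A v‖ ^ 2 / 2 := by nlinarith
    _ ≤ ⟪v, S v⟫ + τ * ⟪A v, S v⟫ + τ * ‖A v‖ ^ 2 := by nlinarith

theorem exists_norm_one_sub_smul_lt_one_of_coercive {T : E →L[ℝ] E} {μ : ℝ} (hμ : 0 < μ)
    (hT : ∀ v, μ * ‖v‖ ^ 2 ≤ ⟪v, T v⟫) : ∃ η > (0 : ℝ), ‖1 - η • T‖ < 1 := by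
  set η := μ / (‖T‖ ^ 2 + μ ^ 2)
  have hη : 0 < η := by positivity
  have hηT : η * ‖T‖ ^ 2 ≤ μ := by
    rw [div_mul_eq_mul_div, div_le_iff₀ (by positivity)]; nlinarith [sq_nonneg μ]
  have hημ : η * μ ≤ 1 := by
    rw [div_mul_eq_mul_div, div_le_one (by positivity)]; nlinarith [sq_nonneg ‖T‖]
  refine ⟨η, hη, (opNorm_le_bound _ (by nlinarith) fun v => ?_).trans_lt
    (show 1 - η * μ / 2 < 1 by nlinarith)⟩
  have hTv : ‖T v‖ ^ 2 ≤ ‖T‖ ^ 2 * ‖v‖ ^ 2 := by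
    rw [← mul_pow]; exact pow_le_pow_left₀ (norm_nonneg _) (T.le_opNorm v) 2
  have hsq : ‖v - η • T v‖ ^ 2 ≤ ((1 - η * μ / 2) * ‖v‖) ^ 2 := by
    calc ‖v - η • T v‖ ^ 2 = ‖v‖ ^ 2 - 2 * η * ⟪v, T v⟫ + η * (η * ‖T v‖ ^ 2) := by
          rw [norm_sub_sq_real, real_inner_smul_right, norm_smul, Real.norm_of_nonneg hη.le]
          ring
      _ ≤ ‖v‖ ^ 2 - 2 * η * (μ * ‖v‖ ^ 2) + η * (μ * ‖v‖ ^ 2) := by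
          have hηTv : η * ‖T v‖ ^ 2 ≤ μ * ‖v‖ ^ 2 :=
            calc η * ‖T v‖ ^ 2 ≤ η * (‖T‖ ^ 2 * ‖v‖ ^ 2) := by gcongr
              _ ≤ μ * ‖v‖ ^ 2 := by rw [← mul_assoc]; gcongr
          gcongr ‖v‖ ^ 2 - 2 * η * ?_ + η * ?_
          exact hT v
      _ ≤ ((1 - η * μ / 2) * ‖v‖) ^ 2 := by nlinarith [sq_nonneg (η * μ * ‖v‖)]
  simpa using (pow_le_pow_iff_left₀ (norm_nonneg _) (by nlinarith [norm_nonneg v])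
    two_ne_zero).1 hsq

/-- **SGA monotonicity / contractivity of the frozen map.**
If `H ∈ ℝ^{d×d}` is invertible, its symmetric part `S = ½(H + Hᵀ)` is positive
semidefinite, and `A = ½(H − Hᵀ)` is its antisymmetric part, then there exist
`η > 0` and `τ > 0` such that `‖I − η(I − τA)H‖₂ < 1`. -/
theorem exists_stepsizes_frozen_contractive
    {d : ℕ} (H : EuclideanSpace ℝ (Fin d) →L[ℝ] EuclideanSpace ℝ (Fin d))
    (hH : IsUnit H)
    (S A : EuclideanSpace ℝ (Fin d) →L[ℝ] EuclideanSpace ℝ (Fin d))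
    (hS : S = ((1:ℝ)/2) • (H + ContinuousLinearMap.adjoint H))
    (hA : A = ((1:ℝ)/2) • (H - ContinuousLinearMap.adjoint H))
    (hSpsd : ∀ v : EuclideanSpace ℝ (Fin d), 0 ≤ ⟪v, S v⟫) :
    ∃ η > (0:ℝ), ∃ τ > (0:ℝ),
      ‖(1 : EuclideanSpace ℝ (Fin d) →L[ℝ] EuclideanSpace ℝ (Fin d)) -
        η • (((1 : EuclideanSpace ℝ (Fin d) →L[ℝ] EuclideanSpace ℝ (Fin d)) - τ • A) * H)‖
        < 1 := by
  have hSpos : S.IsPositive := by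
    refine S.isPositive_iff.2 ⟨fun v w => ?_, fun v => real_inner_comm v (S v) ▸ hSpsd v⟩
    simp only [hS, coe_coe, smul_apply, add_apply, real_inner_smul_left, real_inner_smul_right,
      inner_add_left, inner_add_right, adjoint_inner_left, adjoint_inner_right]
    ring
  have hAskew : ∀ v w, ⟪A v, w⟫ = -⟪v, A w⟫ := by
    intro v w
    simp only [hA, smul_apply, sub_apply, real_inner_smul_left, real_inner_smul_right,
      inner_sub_left, inner_sub_right, adjoint_inner_left, adjoint_inner_right]
    ring
  have hSA : S + A = H := by rw [hS, hA]; module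
  subst hSA
  obtain ⟨τ, hτ, μ, hμ, hcoer⟩ := exists_coercive_one_sub_smul_mul_add hSpos hAskew hH
  obtain ⟨η, hη, hcontr⟩ := exists_norm_one_sub_smul_lt_one_of_coercive hμ hcoer
  exact ⟨η, hη, τ, hτ, hcontr⟩
end
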